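/- Equivalence of the right-only NNF proof system: let A be a set of sequents each of the form (φ^R, ψ^R) with φ and ψ in NNF. For formulas φ, ψ in NNF, the sequent (φ^R, ψ^R) is provable in the full orthologic proof system from A if and only if it is derivable in the restricted right-only system whose rules are: Ax (any sequent of A); Hyp': (x^R, (¬x)^R) for each variable x; Cut': from (φ^R, γ^R) and ((getInverse(γ))^R, ψ^R) derive (φ^R, ψ^R); Replace: from (γ^R, γ^R) derive (γ^R, δ^R) for any NNF formula δ; ∧-R and ∨-R as in the full system; and the axiom (γ^R, ⊤^R). -/

import Mathlib

/-!
Read a left formula `φ^L` as the right formula `nnf(¬φ)^R`. Under this reading every rule of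
orthologic becomes a rule of the right-only system (possibly with the pair swapped), `Hyp`
becomes the pair `(nnf(¬φ), nnf φ)`, derivable by induction on `φ`, and the axioms, being
right-only and in NNF, are unchanged. Conversely every right-only rule is admissible in full
orthologic; for `Cut'` this rests on `nnf(¬γ)^L ⊢ (¬γ)^R`, an instance of the provable
equivalence of a formula with its negation normal form.
-/

/-- Propositional formulas over a set `X` of variables. -/
inductive Formula (X : Type) : Type
  | var : X → Formula X
  | bot : Formula X
  | top : Formula X
  | and : Formula X → Formula X → Formula X
  | or : Formula X → Formula X → Formula X
  | not : Formula X → Formula X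

/-- An ortholattice: a bounded lattice with a complement operation. -/
class Ortholattice (L : Type) extends Lattice L, BoundedOrder L where
  compl : L → L
  compl_compl : ∀ x : L, compl (compl x) = x
  compl_sup : ∀ x y : L, compl (x ⊔ y) = compl x ⊓ compl y
  compl_inf : ∀ x y : L, compl (x ⊓ y) = compl x ⊔ compl y
  inf_compl : ∀ x : L, x ⊓ compl x = ⊥
  sup_compl : ∀ x : L, x ⊔ compl x = ⊤

/-- Homomorphic extension of a valuation `v : X → L` to formulas. -/
def Formula.eval {X L : Type} [Ortholattice L] (v : X → L) : Formula X → L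
  | .var x => v x
  | .bot => ⊥
  | .top => ⊤
  | .and φ ψ => φ.eval v ⊓ ψ.eval v
  | .or φ ψ => φ.eval v ⊔ ψ.eval v
  | .not φ => Ortholattice.compl (φ.eval v)

/-- Annotated formulas: a formula marked as left (`L`) or right (`R`). -/
inductive Ann (X : Type) : Type
  | L : Formula X → Ann X
  | R : Formula X → Ann X

/-- The underlying formula of an annotated formula. -/
def Ann.fml {X : Type} : Ann X → Formula X
  | .L φ => φ
  | .R φ => φ

/-- An orthologic sequent: an unordered pair of annotated formulas. -/
abbrev Sequent (X : Type) := Sym2 (Ann X)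

/-- The orthologic proof system, with non-logical axioms `A`. -/
inductive OLProof {X : Type} (A : Set (Sequent X)) : Sequent X → Prop
  | ax {t : Sequent X} : t ∈ A → OLProof A t
  | hyp (φ : Formula X) : OLProof A s(Ann.L φ, Ann.R φ)
  | cut (Γ Δ : Ann X) (φ : Formula X) :
      OLProof A s(Γ, Ann.R φ) → OLProof A s(Ann.L φ, Δ) → OLProof A s(Γ, Δ)
  | replace (Γ Δ : Ann X) : OLProof A s(Γ, Γ) → OLProof A s(Γ, Δ)
  | andL₁ (φ ψ : Formula X) (Δ : Ann X) :
      OLProof A s(Ann.L φ, Δ) → OLProof A s(Ann.L (φ.and ψ), Δ)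
  | andL₂ (φ ψ : Formula X) (Δ : Ann X) :
      OLProof A s(Ann.L ψ, Δ) → OLProof A s(Ann.L (φ.and ψ), Δ)
  | andR (Γ : Ann X) (φ ψ : Formula X) :
      OLProof A s(Γ, Ann.R φ) → OLProof A s(Γ, Ann.R ψ) → OLProof A s(Γ, Ann.R (φ.and ψ))
  | orL (φ ψ : Formula X) (Δ : Ann X) :
      OLProof A s(Ann.L φ, Δ) → OLProof A s(Ann.L ψ, Δ) → OLProof A s(Ann.L (φ.or ψ), Δ)
  | orR₁ (Γ : Ann X) (φ ψ : Formula X) :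
      OLProof A s(Γ, Ann.R φ) → OLProof A s(Γ, Ann.R (φ.or ψ))
  | orR₂ (Γ : Ann X) (φ ψ : Formula X) :
      OLProof A s(Γ, Ann.R ψ) → OLProof A s(Γ, Ann.R (φ.or ψ))
  | negL (Γ : Ann X) (φ : Formula X) :
      OLProof A s(Γ, Ann.R φ) → OLProof A s(Γ, Ann.L φ.not)
  | negR (φ : Formula X) (Δ : Ann X) :
      OLProof A s(Ann.L φ, Δ) → OLProof A s(Ann.R φ.not, Δ)
  | botL (Δ : Ann X) : OLProof A s(Ann.L Formula.bot, Δ)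
  | topR (Γ : Ann X) : OLProof A s(Γ, Ann.R Formula.top)

/-- Satisfaction of an (ordered) pair of annotated formulas by a valuation. -/
def AnnSat {X L : Type} [Ortholattice L] (v : X → L) : Ann X → Ann X → Prop
  | .L φ, .R ψ => φ.eval v ≤ ψ.eval v
  | .R φ, .L ψ => ψ.eval v ≤ φ.eval v
  | .L φ, .L ψ => φ.eval v ⊓ ψ.eval v = ⊥
  | .R φ, .R ψ => φ.eval v ⊔ ψ.eval v = ⊤

/-- A valuation satisfies a sequent. -/
def SeqSat {X L : Type} [Ortholattice L] (v : X → L) (t : Sequent X) : Prop :=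
  ∀ a b : Ann X, t = s(a, b) → AnnSat v a b
/-- Boolean (classical) evaluation of a formula. -/
def Formula.evalB {X : Type} (v : X → Bool) : Formula X → Bool
  | .var x => v x
  | .bot => false
  | .top => true
  | .and φ ψ => φ.evalB v && ψ.evalB v
  | .or φ ψ => φ.evalB v || ψ.evalB v
  | .not φ => !(φ.evalB v)

/-- Size of a formula (number of nodes). -/
def Formula.size {X : Type} : Formula X → Nat
  | .var _ => 1
  | .bot => 1
  | .top => 1
  | .and φ ψ => φ.size + ψ.size + 1
  | .or φ ψ => φ.size + ψ.size + 1
  | .not φ => φ.size + 1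

/-- Negation normal form. -/
def Formula.nnf {X : Type} : Formula X → Formula X
  | .var x => .var x
  | .bot => .bot
  | .top => .top
  | .and φ ψ => .and φ.nnf ψ.nnf
  | .or φ ψ => .or φ.nnf ψ.nnf
  | .not (.var x) => .not (.var x)
  | .not .bot => .top
  | .not .top => .bot
  | .not (.and φ ψ) => .or φ.not.nnf ψ.not.nnf
  | .not (.or φ ψ) => .and φ.not.nnf ψ.not.nnf
  | .not (.not φ) => φ.nnf
termination_by φ => φ.size
decreasing_by all_goals (simp [Formula.size] <;> omega)

/-- A formula is in NNF if negation occurs only directly on variables. -/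
def Formula.IsNNF {X : Type} : Formula X → Prop
  | .var _ => True
  | .bot => True
  | .top => True
  | .and φ ψ => φ.IsNNF ∧ ψ.IsNNF
  | .or φ ψ => φ.IsNNF ∧ ψ.IsNNF
  | .not (.var _) => True
  | .not _ => False

/-- `getInverse φ = nnf (¬ φ)`. -/
def getInverse {X : Type} (φ : Formula X) : Formula X := φ.not.nnf

/-- Orthologic equivalence of formulas (without non-logical axioms). -/
def OLEquiv {X : Type} (φ ψ : Formula X) : Prop :=
  OLProof (∅ : Set (Sequent X)) s(Ann.L φ, Ann.R ψ) ∧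
  OLProof (∅ : Set (Sequent X)) s(Ann.L ψ, Ann.R φ)

/-- `Subformula γ φ` means `γ` is a subformula of `φ`. -/
inductive Subformula {X : Type} : Formula X → Formula X → Prop
  | refl (φ : Formula X) : Subformula φ φ
  | and_left {γ φ ψ : Formula X} : Subformula γ φ → Subformula γ (φ.and ψ)
  | and_right {γ φ ψ : Formula X} : Subformula γ ψ → Subformula γ (φ.and ψ)
  | or_left {γ φ ψ : Formula X} : Subformula γ φ → Subformula γ (φ.or ψ)
  | or_right {γ φ ψ : Formula X} : Subformula γ ψ → Subformula γ (φ.or ψ)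
  | not_sub {γ φ : Formula X} : Subformula γ φ → Subformula γ φ.not
/-- The restricted right-only proof system on NNF formulas. A sequent is here an
unordered pair of formulas `(φ, ψ)`, standing for `(φ^R, ψ^R)`. -/
inductive OLRight {X : Type} (A : Set (Sym2 (Formula X))) : Sym2 (Formula X) → Prop
  | ax {t : Sym2 (Formula X)} : t ∈ A → OLRight A t
  | hyp (x : X) : OLRight A s(Formula.var x, (Formula.var x).not)
  | cut (φ γ ψ : Formula X) :
      OLRight A s(φ, γ) → OLRight A s(getInverse γ, ψ) → OLRight A s(φ, ψ)
  | replace (γ δ : Formula X) : δ.IsNNF → OLRight A s(γ, γ) → OLRight A s(γ, δ)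
  | andR (γ φ ψ : Formula X) :
      OLRight A s(γ, φ) → OLRight A s(γ, ψ) → OLRight A s(γ, φ.and ψ)
  | orR₁ (γ φ ψ : Formula X) : OLRight A s(γ, φ) → OLRight A s(γ, φ.or ψ)
  | orR₂ (γ φ ψ : Formula X) : OLRight A s(γ, ψ) → OLRight A s(γ, φ.or ψ)
  | topR (γ : Formula X) : OLRight A s(γ, Formula.top)

/-- The least set `P` of unordered pairs over `SF` computed by the entailment
algorithm: it contains the axioms `A` and the hypothesis pairs `(x, ¬x)`, and is
closed under the ∨-step, ∧-step, Replace-step and Cut-step. -/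
inductive Deduced {X : Type} (A : Set (Sym2 (Formula X))) (SF AF : Set (Formula X)) :
    Sym2 (Formula X) → Prop
  | ax {t : Sym2 (Formula X)} : t ∈ A → Deduced A SF AF t
  | hyp (x : X) : Formula.var x ∈ SF → (Formula.var x).not ∈ SF →
      Deduced A SF AF s(Formula.var x, (Formula.var x).not)
  | orStep (a b k : Formula X) : a.or k ∈ SF →
      Deduced A SF AF s(a, b) → Deduced A SF AF s(a.or k, b)
  | andStep (a b k : Formula X) : a.and k ∈ SF →
      Deduced A SF AF s(a, b) → Deduced A SF AF s(k, b) → Deduced A SF AF s(a.and k, b)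
  | replaceStep (a γ : Formula X) : γ ∈ SF →
      Deduced A SF AF s(a, a) → Deduced A SF AF s(a, γ)
  | cutStep (a b c : Formula X) : c ∈ AF →
      Deduced A SF AF s(a, c) → Deduced A SF AF s(getInverse c, b) → Deduced A SF AF s(a, b)

namespace Formula

variable {X : Type}

theorem isNNF_nnf (φ : Formula X) : φ.nnf.IsNNF := by
  induction φ using Formula.nnf.induct <;> simp_all [Formula.nnf, Formula.IsNNF]

theorem IsNNF.nnf_eq {φ : Formula X} (h : φ.IsNNF) : φ.nnf = φ := by
  induction φ using Formula.nnf.induct <;> simp_all [Formula.nnf, Formula.IsNNF]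

end Formula

theorem getInverse_nnf {X : Type} (φ : Formula X) : getInverse φ.nnf = getInverse φ := by
  unfold getInverse
  induction φ using Formula.nnf.induct <;> simp_all [Formula.nnf]

theorem getInverse_and {X : Type} (φ ψ : Formula X) :
    getInverse (φ.and ψ) = (getInverse φ).or (getInverse ψ) := by
  simp only [getInverse, Formula.nnf]

theorem getInverse_or {X : Type} (φ ψ : Formula X) :
    getInverse (φ.or ψ) = (getInverse φ).and (getInverse ψ) := by
  simp only [getInverse, Formula.nnf]

theorem getInverse_not {X : Type} (φ : Formula X) : getInverse φ.not = φ.nnf := by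
  simp only [getInverse, Formula.nnf]

theorem getInverse_bot {X : Type} : getInverse (Formula.bot : Formula X) = .top := by
  simp only [getInverse, Formula.nnf]

namespace OLProof

variable {X : Type} {A B : Set (Sequent X)}

theorem swap {a b : Ann X} (h : OLProof A s(a, b)) : OLProof A s(b, a) := by
  rwa [Sym2.eq_swap]

theorem mono (hAB : A ⊆ B) {t : Sequent X} (h : OLProof A t) : OLProof B t := by
  induction h with
  | ax ht => exact ax (hAB ht)
  | hyp φ => exact hyp φ
  | cut _ _ _ _ _ ih₁ ih₂ => exact cut _ _ _ ih₁ ih₂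
  | replace _ _ _ ih => exact replace _ _ ih
  | andL₁ _ _ _ _ ih => exact andL₁ _ _ _ ih
  | andL₂ _ _ _ _ ih => exact andL₂ _ _ _ ih
  | andR _ _ _ _ _ ih₁ ih₂ => exact andR _ _ _ ih₁ ih₂
  | orL _ _ _ _ _ ih₁ ih₂ => exact orL _ _ _ ih₁ ih₂
  | orR₁ _ _ _ _ ih => exact orR₁ _ _ _ ih
  | orR₂ _ _ _ _ ih => exact orR₂ _ _ _ ih
  | negL _ _ _ ih => exact negL _ _ ih
  | negR _ _ _ ih => exact negR _ _ ih
  | botL Δ => exact botL Δ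
  | topR Γ => exact topR Γ

theorem not_left_left (φ : Formula X) : OLProof A s(Ann.L φ.not, Ann.L φ) :=
  (negL _ _ (hyp φ)).swap

theorem not_right_right (φ : Formula X) : OLProof A s(Ann.R φ.not, Ann.R φ) :=
  negR _ _ (hyp φ)

end OLProof

namespace OLEquiv

open OLProof

variable {X : Type} {φ ψ χ φ' ψ' : Formula X}

theorem refl (φ : Formula X) : OLEquiv φ φ :=
  ⟨hyp φ, hyp φ⟩

theorem trans (h₁ : OLEquiv φ ψ) (h₂ : OLEquiv ψ χ) : OLEquiv φ χ :=
  ⟨cut _ _ _ h₁.1 h₂.1, cut _ _ _ h₂.2 h₁.2⟩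

theorem and_congr (hφ : OLEquiv φ φ') (hψ : OLEquiv ψ ψ') :
    OLEquiv (φ.and ψ) (φ'.and ψ') :=
  ⟨andR _ _ _ (andL₁ _ _ _ hφ.1) (andL₂ _ _ _ hψ.1),
    andR _ _ _ (andL₁ _ _ _ hφ.2) (andL₂ _ _ _ hψ.2)⟩

theorem or_congr (hφ : OLEquiv φ φ') (hψ : OLEquiv ψ ψ') :
    OLEquiv (φ.or ψ) (φ'.or ψ') :=
  ⟨orL _ _ _ (orR₁ _ _ _ hφ.1) (orR₂ _ _ _ hψ.1),
    orL _ _ _ (orR₁ _ _ _ hφ.2) (orR₂ _ _ _ hψ.2)⟩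

theorem top_not_bot : OLEquiv (Formula.top : Formula X) Formula.bot.not :=
  ⟨(negR _ _ (botL _)).swap, topR _⟩

theorem bot_not_top : OLEquiv (Formula.bot : Formula X) Formula.top.not :=
  ⟨botL _, (negL _ _ (topR _)).swap⟩

theorem not_not (φ : Formula X) : OLEquiv φ φ.not.not :=
  ⟨(negR _ _ (not_left_left φ)).swap, (negL _ _ (not_right_right φ).swap).swap⟩

theorem or_not_not (φ ψ : Formula X) : OLEquiv (φ.not.or ψ.not) (φ.and ψ).not := by
  refine ⟨orL _ _ _ ?_ ?_, (negL _ _ (andR _ _ _ ?_ ?_)).swap⟩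
  · exact (negR _ _ (negL _ _ (andL₁ _ _ _ (hyp φ)))).swap
  · exact (negR _ _ (negL _ _ (andL₂ _ _ _ (hyp ψ)))).swap
  · exact (orR₁ _ _ _ (not_right_right φ).swap).swap
  · exact (orR₂ _ _ _ (not_right_right ψ).swap).swap

theorem and_not_not (φ ψ : Formula X) : OLEquiv (φ.not.and ψ.not) (φ.or ψ).not := by
  refine ⟨(negR _ _ (orL _ _ _ ?_ ?_)).swap, andR _ _ _ ?_ ?_⟩
  · exact (andL₁ _ _ _ (not_left_left φ)).swap
  · exact (andL₂ _ _ _ (not_left_left ψ)).swap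
  · exact (negR _ _ (negL _ _ (orR₁ _ _ _ (hyp φ)))).swap
  · exact (negR _ _ (negL _ _ (orR₂ _ _ _ (hyp ψ)))).swap

end OLEquiv

theorem olEquiv_nnf {X : Type} (φ : Formula X) : OLEquiv φ.nnf φ := by
  induction φ using Formula.nnf.induct <;> simp only [Formula.nnf]
  case case1 | case2 | case3 | case6 => exact .refl _
  case case4 ih₁ ih₂ => exact ih₁.and_congr ih₂
  case case5 ih₁ ih₂ => exact ih₁.or_congr ih₂
  case case7 => exact .top_not_bot
  case case8 => exact .bot_not_top
  case case9 φ ψ ih₁ ih₂ => exact (ih₁.or_congr ih₂).trans (.or_not_not φ ψ)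
  case case10 φ ψ ih₁ ih₂ => exact (ih₁.and_congr ih₂).trans (.and_not_not φ ψ)
  case case11 φ ih => exact ih.trans (.not_not φ)

theorem OLProof.getInverse_left_left {X : Type} {A : Set (Sequent X)} (φ : Formula X) :
    OLProof A s(Ann.L (getInverse φ), Ann.L φ) :=
  cut _ _ _ ((olEquiv_nnf φ.not).1.mono (Set.empty_subset A)) (not_left_left φ)

namespace OLRight

variable {X : Type} {A : Set (Sym2 (Formula X))}

theorem swap {φ ψ : Formula X} (h : OLRight A s(φ, ψ)) : OLRight A s(ψ, φ) := by
  rwa [Sym2.eq_swap]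

theorem hyp_nnf (φ : Formula X) : OLRight A s(getInverse φ, φ.nnf) := by
  unfold getInverse
  induction φ <;> simp only [Formula.nnf]
  case var x => exact (hyp x).swap
  case bot => exact (topR _).swap
  case top => exact topR _
  case and ih₁ ih₂ => exact andR _ _ _ (orR₁ _ _ _ ih₁.swap).swap (orR₂ _ _ _ ih₂.swap).swap
  case or ih₁ ih₂ => exact (andR _ _ _ (orR₁ _ _ _ ih₁).swap (orR₂ _ _ _ ih₂).swap).swap
  case not ih => exact ih.swap

theorem toOLProof {u : Sym2 (Formula X)} (h : OLRight A u) :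
    OLProof (Sym2.map Ann.R '' A) (Sym2.map Ann.R u) := by
  induction h with
  | ax ht => exact .ax ⟨_, ht, rfl⟩
  | hyp x => exact (OLProof.not_right_right _).swap
  | cut _ γ _ _ _ ih₁ ih₂ =>
    exact .cut _ _ γ ih₁ (OLProof.cut _ _ _ ih₂.swap (OLProof.getInverse_left_left γ)).swap
  | replace _ _ _ _ ih => exact .replace _ _ ih
  | andR _ _ _ _ _ ih₁ ih₂ => exact .andR _ _ _ ih₁ ih₂
  | orR₁ _ _ _ _ ih => exact .orR₁ _ _ _ ih
  | orR₂ _ _ _ _ ih => exact .orR₂ _ _ _ ih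
  | topR _ => exact .topR _

end OLRight

def Ann.toNNF {X : Type} : Ann X → Formula X
  | .L φ => getInverse φ
  | .R φ => φ.nnf

theorem Ann.isNNF_toNNF {X : Type} (a : Ann X) : a.toNNF.IsNNF := by
  cases a <;> exact Formula.isNNF_nnf _

theorem OLProof.toOLRight {X : Type} {A : Set (Sym2 (Formula X))}
    (hA : ∀ t ∈ A, ∀ γ ∈ t, Formula.IsNNF γ) {u : Sequent X}
    (h : OLProof (Sym2.map Ann.R '' A) u) : OLRight A (Sym2.map Ann.toNNF u) := by
  induction h
  case ax ht =>
    obtain ⟨t, htA, rfl⟩ := ht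
    have hid : ∀ γ ∈ t, (Ann.toNNF ∘ Ann.R) γ = id γ := fun γ hγ => (hA t htA γ hγ).nnf_eq
    rw [Sym2.map_map, Sym2.map_congr hid, Sym2.map_id, id]
    exact .ax htA
  all_goals simp only [Sym2.map_mk, Ann.toNNF, Formula.nnf, getInverse_and, getInverse_or,
    getInverse_not, getInverse_bot] at *
  case hyp φ => exact OLRight.hyp_nnf φ
  case cut φ _ _ ih₁ ih₂ => exact .cut _ φ.nnf _ ih₁ ((getInverse_nnf φ).symm ▸ ih₂)
  case replace Δ _ ih => exact .replace _ _ Δ.isNNF_toNNF ih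
  case andL₁ ih => exact (OLRight.orR₁ _ _ _ ih.swap).swap
  case andL₂ ih => exact (OLRight.orR₂ _ _ _ ih.swap).swap
  case andR ih₁ ih₂ => exact .andR _ _ _ ih₁ ih₂
  case orL ih₁ ih₂ => exact (OLRight.andR _ _ _ ih₁.swap ih₂.swap).swap
  case orR₁ ih => exact .orR₁ _ _ _ ih
  case orR₂ ih => exact .orR₂ _ _ _ ih
  case negL ih => exact ih
  case negR ih => exact ih
  case botL => exact (OLRight.topR _).swap
  case topR => exact .topR _

theorem right_only_system_equiv_general {X : Type}
    (A : Set (Sym2 (Formula X))) (hA : ∀ t ∈ A, ∀ γ ∈ t, Formula.IsNNF γ)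
    (φ ψ : Formula X) (hφ : φ.IsNNF) (hψ : ψ.IsNNF) :
    OLProof (Sym2.map Ann.R '' A) s(Ann.R φ, Ann.R ψ) ↔ OLRight A s(φ, ψ) := by
  refine ⟨fun h => ?_, fun h => h.toOLProof⟩
  simpa only [Sym2.map_mk, Ann.toNNF, hφ.nnf_eq, hψ.nnf_eq] using h.toOLRight hA

/-- Equivalence of the right-only NNF proof system with the full
orthologic proof system, for NNF goals and right-only NNF axioms. -/
theorem right_only_system_equiv {X : Type} [Countable X] [Infinite X]
    (A : Set (Sym2 (Formula X))) (hA : ∀ t ∈ A, ∀ γ ∈ t, Formula.IsNNF γ)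
    (φ ψ : Formula X) (hφ : φ.IsNNF) (hψ : ψ.IsNNF) :
    OLProof (Sym2.map Ann.R '' A) s(Ann.R φ, Ann.R ψ) ↔ OLRight A s(φ, ψ) :=
  right_only_system_equiv_general A hA φ ψ hφ hψ
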